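/- Second-moment identity (identity (mt 22)): Let ε ∈ (0,1) satisfy ε^(1−n) < R_min, and let f be a classical solution of the ε-Milne problem with geometric correction with continuous source S and arbitrary in-flow data. Then for every η ∈ (0,L): d/dη ⟨sin²φ, f⟩(η) = −⟨sin φ, f − f̄⟩(η) + F̃(η) ⟨1 − 3 sin²φ, f − f̄⟩(η) + G(η) ⟨(1 − 3 sin²φ) cos²ψ, f − f̄⟩(η) + ⟨sin φ, S⟩(η). -/

import Mathlib

noncomputable section

open Real Set MeasureTheory

namespace MilneStmt

/-- The boundary-layer thickness `L = ε^(-n)`. -/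
def layerL (ε n : ℝ) : ℝ := ε ^ (-n)

/-- The geometric force `F(η,ψ)`. -/
def force (R₁ R₂ ε η ψ : ℝ) : ℝ :=
  -ε * (Real.sin ψ ^ 2 / (R₁ - ε * η) + Real.cos ψ ^ 2 / (R₂ - ε * η))

/-- The domain `D = [0,L] × [-π/2, π/2] × [-π, π]` of the variables `(η, φ, ψ)`. -/
def milneDomain (L : ℝ) : Set (ℝ × ℝ × ℝ) :=
  Icc (0 : ℝ) L ×ˢ Icc (-(π / 2)) (π / 2) ×ˢ Icc (-π) π

/-- The in-flow set `{(φ,ψ) : sin φ > 0, ψ ∈ [-π,π]}` (with `φ` in the velocity range). -/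
def inflowSet : Set (ℝ × ℝ) :=
  {q | 0 < Real.sin q.1 ∧ q.1 ∈ Icc (-(π / 2)) (π / 2) ∧ q.2 ∈ Icc (-π) π}

/-- The angular average `f̄(η)`. -/
def angAvg (f : ℝ × ℝ × ℝ → ℝ) (η : ℝ) : ℝ :=
  (1 / (4 * π)) * ∫ ψ in (-π)..π, ∫ φ in (-(π / 2))..(π / 2), f (η, φ, ψ) * Real.cos φ

/-- Partial derivative in `η`. -/
def dEta (g : ℝ × ℝ × ℝ → ℝ) (p : ℝ × ℝ × ℝ) : ℝ :=
  deriv (fun t => g (t, p.2.1, p.2.2)) p.1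

/-- Partial derivative in `φ`. -/
def dPhi (g : ℝ × ℝ × ℝ → ℝ) (p : ℝ × ℝ × ℝ) : ℝ :=
  deriv (fun t => g (p.1, t, p.2.2)) p.2.1

/-- Partial derivative in `ψ`. -/
def dPsi (g : ℝ × ℝ × ℝ → ℝ) (p : ℝ × ℝ × ℝ) : ℝ :=
  deriv (fun t => g (p.1, p.2.1, t)) p.2.2

/-- A classical solution of the ε-Milne problem with geometric correction,
with in-flow data `h` and source `S`. -/
structure IsMilneSolution (R₁ R₂ ε n : ℝ) (h : ℝ → ℝ → ℝ) (S : ℝ × ℝ × ℝ → ℝ)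
    (f : ℝ × ℝ × ℝ → ℝ) : Prop where
  smooth : ContDiffOn ℝ 1 f (milneDomain (layerL ε n))
  eqn : ∀ p ∈ interior (milneDomain (layerL ε n)),
    Real.sin p.2.1 * dEta f p + force R₁ R₂ ε p.1 p.2.2 * Real.cos p.2.1 * dPhi f p
      + f p - angAvg f p.1 = S p
  inflow : ∀ q ∈ inflowSet, f (0, q.1, q.2) = h q.1 q.2
  reflect : ∀ φ ψ : ℝ, f (layerL ε n, φ, ψ) = f (layerL ε n, -φ, ψ)

/-- The weighted `L²` norm on `D`. -/
def l2Norm (L : ℝ) (g : ℝ × ℝ × ℝ → ℝ) : ℝ :=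
  Real.sqrt (∫ η in (0 : ℝ)..L, ∫ ψ in (-π)..π, ∫ φ in (-(π / 2))..(π / 2),
    g (η, φ, ψ) ^ 2 * Real.cos φ)

/-- The `L^∞` norm (sup over `D`). -/
def linfNorm (L : ℝ) (g : ℝ × ℝ × ℝ → ℝ) : ℝ :=
  ⨆ p ∈ milneDomain L, |g p|

/-- The `L^∞` norm over the in-flow boundary. -/
def inflowLinf (g : ℝ → ℝ → ℝ) : ℝ :=
  ⨆ q ∈ inflowSet, |g q.1 q.2|

/-- The limit value `f_L = (3/(4π)) ∫∫ f(L,φ,ψ) sin²φ cos φ dφ dψ`. -/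
def limitValue (L : ℝ) (f : ℝ × ℝ × ℝ → ℝ) : ℝ :=
  (3 / (4 * π)) * ∫ ψ in (-π)..π, ∫ φ in (-(π / 2))..(π / 2),
    f (L, φ, ψ) * Real.sin φ ^ 2 * Real.cos φ

/-- The data bounds with constants `K` and `M` for in-flow data `h` and source `S`. -/
structure DataBounds (K M L : ℝ) (h : ℝ → ℝ → ℝ) (S : ℝ × ℝ × ℝ → ℝ) : Prop where
  hSmooth : ContDiffOn ℝ 1 (fun q : ℝ × ℝ => h q.1 q.2) inflowSet
  hBound : ∀ q ∈ inflowSet,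
    |h q.1 q.2| + |deriv (fun t => h t q.2) q.1| + |deriv (fun t => h q.1 t) q.2| ≤ M
  sSmooth : ContDiffOn ℝ 1 S (milneDomain L)
  sBound : ∀ p ∈ milneDomain L,
    Real.exp (K * p.1) * (|S p| + |dEta S p| + |dPhi S p| + |dPsi S p|) ≤ M

/-- The angular pairing `⟨a, b⟩(η) = ∫∫ a b cos φ dφ dψ`. -/
def brkt (a b : ℝ × ℝ × ℝ → ℝ) (η : ℝ) : ℝ :=
  ∫ ψ in (-π)..π, ∫ φ in (-(π / 2))..(π / 2), a (η, φ, ψ) * b (η, φ, ψ) * Real.cos φ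

/-- `F̃(η) = -ε/(R₁ - εη)`. -/
def Ftilde (R₁ ε η : ℝ) : ℝ := -ε / (R₁ - ε * η)

/-- `G(η) = -ε(R₁ - R₂)/((R₁ - εη)(R₂ - εη))`. -/
def Gfun (R₁ R₂ ε η : ℝ) : ℝ := -(ε * (R₁ - R₂)) / ((R₁ - ε * η) * (R₂ - ε * η))

/-! Differentiate under the integral sign and substitute the equation multiplied by
`sin φ cos φ`. The force term `F cos φ ∂_φ f` then appears against the weight `sin φ cos² φ`,
which vanishes at `φ = ±π/2` and has `φ`-derivative `(1 - 3 sin² φ) cos φ`. As `f̄` does not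
depend on `φ`, integrating by parts against `f - f̄` turns it into `F ⟨1 - 3 sin² φ, f - f̄⟩`.
Splitting `F = F̃ + G cos² ψ` gives the identity.

Since `f` is only `C¹` on the closed box `D`, the solution, its partial derivatives in `η` and `φ`
and the source are first extended continuously to `ℝ³` (Tietze); the equation, given on the
interior, then holds on each closed angular slice by continuity. -/

universe u v

open Filter Topology Function
open scoped Interval

theorem exists_continuous_eqOn {X : Type u} {Y : Type v} [TopologicalSpace X] [NormalSpace X]
    [TopologicalSpace Y] [TietzeExtension.{u, v} Y] {s : Set X} (hs : IsClosed s) {g : X → Y}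
    (hg : ContinuousOn g s) : ∃ G : X → Y, Continuous G ∧ EqOn G g s := by
  obtain ⟨G, hG⟩ := ContinuousMap.exists_restrict_eq hs ⟨s.domRestrict g, hg.domRestrict⟩
  exact ⟨G, G.continuous, fun x hx => congrFun (congrArg DFunLike.coe hG) ⟨x, hx⟩⟩

theorem _root_.Set.EqOn.of_Ioo_prod_Ioo {X : Type*} [TopologicalSpace X] [T2Space X]
    {g₁ g₂ : ℝ × ℝ → X} {a b c d : ℝ} (hab : a ≠ b) (hcd : c ≠ d) (hg₁ : Continuous g₁)
    (hg₂ : Continuous g₂)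
    (h : EqOn g₁ g₂ (Ioo a b ×ˢ Ioo c d)) : EqOn g₁ g₂ (Icc a b ×ˢ Icc c d) := by
  simpa only [closure_prod_eq, closure_Ioo hab, closure_Ioo hcd] using h.closure hg₁ hg₂

theorem _root_.DifferentiableOn.hasDerivAt_comp_of_eqOn {E F : Type*}
    [NormedAddCommGroup E] [NormedSpace ℝ E] [NormedAddCommGroup F] [NormedSpace ℝ F]
    {f g : E → F} {D : Set E} (hf : DifferentiableOn ℝ f D) (hg : EqOn g f D) {γ : ℝ → E}
    {v : E} {t : ℝ} (hγ : HasDerivAt γ v t) (hD : ∀ᶠ y in 𝓝 t, γ y ∈ D) :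
    HasDerivAt (g ∘ γ) (fderivWithin ℝ f D (γ t) v) t :=
  ((hf _ hD.self_of_nhds).hasFDerivWithinAt.comp_hasDerivWithinAt t hγ.hasDerivWithinAt
    fun _ hy => hy).hasDerivAt hD |>.congr_of_eventuallyEq (hD.mono fun _ hy => hg hy)

theorem hasDerivAt_intervalIntegral_of_continuous {g g' : ℝ → ℝ → ℝ} {a b x₀ : ℝ} {U : Set ℝ}
    (hU : U ∈ 𝓝 x₀) (hg : Continuous (uncurry g)) (hg' : Continuous (uncurry g'))
    (hderiv : ∀ x ∈ U, ∀ t ∈ [[a, b]], HasDerivAt (g · t) (g' x t) x) :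
    HasDerivAt (fun x => ∫ t in a..b, g x t) (∫ t in a..b, g' x₀ t) x₀ := by
  obtain ⟨r, hr, hrU⟩ := Metric.nhds_basis_closedBall.mem_iff.1 hU
  obtain ⟨C, hC⟩ := (isCompact_closedBall x₀ r).prod isCompact_uIcc
    |>.exists_bound_of_continuousOn hg'.continuousOn
  have hball : Metric.ball x₀ r ⊆ Metric.closedBall x₀ r := Metric.ball_subset_closedBall
  refine (intervalIntegral.hasDerivAt_integral_of_dominated_loc_of_deriv_le (bound := fun _ => C)
    (Metric.ball_mem_nhds x₀ hr) (.of_forall fun x => (hg.uncurry_left x).aestronglyMeasurable)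
    ((hg.uncurry_left x₀).intervalIntegrable a b) (hg'.uncurry_left x₀).aestronglyMeasurable
    (.of_forall fun t ht x hx => hC (x, t) ⟨hball hx, uIoc_subset_uIcc ht⟩)
    intervalIntegrable_const
    (.of_forall fun t ht x hx => hderiv x (hrU (hball hx)) t (uIoc_subset_uIcc ht))).2

theorem hasDerivAt_iteratedIntegral {u u' : ℝ × ℝ × ℝ → ℝ} {a b c d x₀ : ℝ} {U : Set ℝ}
    (hU : IsOpen U) (hx₀ : x₀ ∈ U) (hu : Continuous u) (hu' : Continuous u')
    (hderiv : ∀ x ∈ U, ∀ t ∈ [[a, b]], ∀ s ∈ [[c, d]],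
      HasDerivAt (fun y => u (y, t, s)) (u' (x, t, s)) x) :
    HasDerivAt (fun x => ∫ s in c..d, ∫ t in a..b, u (x, t, s))
      (∫ s in c..d, ∫ t in a..b, u' (x₀, t, s)) x₀ := by
  have hint : ∀ w : ℝ × ℝ × ℝ → ℝ, Continuous w →
      Continuous (uncurry fun x s => ∫ t in a..b, w (x, t, s)) := fun w hw =>
    intervalIntegral.continuous_parametric_intervalIntegral_of_continuous'
      (f := fun q : ℝ × ℝ => fun t => w (q.1, t, q.2)) (by fun_prop) a b
  exact hasDerivAt_intervalIntegral_of_continuous (hU.mem_nhds hx₀) (hint u hu) (hint u' hu')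
    fun x hx s hs => hasDerivAt_intervalIntegral_of_continuous (hU.mem_nhds hx)
      (by fun_prop) (by fun_prop) fun y hy t ht => hderiv y hy t ht s hs

theorem hasDerivAt_sin_mul_cos_sq (φ : ℝ) :
    HasDerivAt (fun φ => sin φ * cos φ ^ 2) ((1 - 3 * sin φ ^ 2) * cos φ) φ :=
  ((hasDerivAt_sin φ).mul ((hasDerivAt_cos φ).pow 2)).congr_deriv <| by
    simp only [Pi.pow_apply]
    linear_combination cos φ * sin_sq_add_cos_sq φ

theorem integral_sin_mul_cos_sq_mul_deriv {w w' : ℝ → ℝ} (m : ℝ) (hw : Continuous w)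
    (hw' : Continuous w') (hderiv : ∀ φ ∈ Ioo (-(π / 2)) (π / 2), HasDerivAt w (w' φ) φ) :
    ∫ φ in -(π / 2)..π / 2, sin φ * cos φ ^ 2 * w' φ
      = -∫ φ in -(π / 2)..π / 2, (1 - 3 * sin φ ^ 2) * (w φ - m) * cos φ := by
  have hpi : -(π / 2) ≤ π / 2 := by linarith [pi_pos]
  rw [intervalIntegral.integral_mul_deriv_eq_deriv_mul_of_hasDerivAt (v := fun φ => w φ - m)
    (by fun_prop) (by fun_prop) (fun φ _ => hasDerivAt_sin_mul_cos_sq φ)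
    (fun φ hφ => (hderiv φ (by simpa [hpi] using hφ)).sub_const m)
    (by apply Continuous.intervalIntegrable; fun_prop) (hw'.intervalIntegrable _ _)]
  simp only [cos_neg, cos_pi_div_two, ne_eq, OfNat.ofNat_ne_zero, not_false_eq_true, zero_pow,
    mul_zero, zero_mul, sub_zero, zero_sub, neg_inj]
  congr 1 with φ
  ring

theorem integral_sin_sq_mul_cos_of_transport {v w w' s : ℝ → ℝ} {c m : ℝ}
    (hw : Continuous w) (hw' : Continuous w') (hs : Continuous s)
    (hderiv : ∀ φ ∈ Ioo (-(π / 2)) (π / 2), HasDerivAt w (w' φ) φ)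
    (heq : ∀ φ ∈ Icc (-(π / 2)) (π / 2), sin φ * v φ + c * cos φ * w' φ + w φ - m = s φ) :
    ∫ φ in -(π / 2)..π / 2, sin φ ^ 2 * v φ * cos φ =
      -(∫ φ in -(π / 2)..π / 2, sin φ * (w φ - m) * cos φ)
        + c * (∫ φ in -(π / 2)..π / 2, (1 - 3 * sin φ ^ 2) * (w φ - m) * cos φ)
        + ∫ φ in -(π / 2)..π / 2, sin φ * s φ * cos φ := by
  have hpi : -(π / 2) ≤ π / 2 := by linarith [pi_pos]
  have hpt : EqOn (fun φ => sin φ ^ 2 * v φ * cos φ)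
      (fun φ => sin φ * s φ * cos φ - c * (sin φ * cos φ ^ 2 * w' φ)
        - sin φ * (w φ - m) * cos φ) [[-(π / 2), π / 2]] := fun φ hφ => by
    rw [uIcc_of_le hpi] at hφ
    simp only [← heq φ hφ]
    ring
  rw [intervalIntegral.integral_congr hpt, intervalIntegral.integral_sub,
    intervalIntegral.integral_sub, intervalIntegral.integral_const_mul,
    integral_sin_mul_cos_sq_mul_deriv m hw hw' hderiv]
  · ring
  all_goals apply Continuous.intervalIntegrable; fun_prop

theorem hasDerivAt_brkt {w : ℝ × ℝ → ℝ} {u uη : ℝ × ℝ × ℝ → ℝ} {U : Set ℝ} {η₀ : ℝ}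
    (hU : IsOpen U) (hη₀ : η₀ ∈ U) (hw : Continuous w) (hu : Continuous u)
    (huη : Continuous uη)
    (hη : ∀ x ∈ U, ∀ φ ∈ Icc (-(π / 2)) (π / 2), ∀ ψ ∈ Icc (-π) π,
      HasDerivAt (fun y => u (y, φ, ψ)) (uη (x, φ, ψ)) x) :
    HasDerivAt (brkt (fun p => w p.2) u) (brkt (fun p => w p.2) uη η₀) η₀ := by
  refine hasDerivAt_iteratedIntegral (u := fun p => w p.2 * u p * cos p.2.1)
    (u' := fun p => w p.2 * uη p * cos p.2.1) hU hη₀ (by fun_prop) (by fun_prop)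
    fun x hx φ hφ ψ hψ => ?_
  rw [uIcc_of_le (by linarith [pi_pos])] at hφ hψ
  exact ((hη x hx φ hφ ψ hψ).const_mul (w (φ, ψ))).mul_const (cos φ)

theorem brkt_congr_of_eqOn {a b b' : ℝ × ℝ × ℝ → ℝ} {L η : ℝ} (hb : EqOn b b' (milneDomain L))
    (hη : η ∈ Icc 0 L) : brkt a b η = brkt a b' η := by
  refine intervalIntegral.integral_congr fun ψ hψ => intervalIntegral.integral_congr fun φ hφ => ?_
  rw [uIcc_of_le (by linarith [pi_pos])] at hφ hψ
  rw [hb (show (η, φ, ψ) ∈ milneDomain L from ⟨hη, hφ, hψ⟩)]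

theorem brkt_sin_sq_eq_of_transport {u uη uφ s : ℝ × ℝ × ℝ → ℝ} {m : ℝ → ℝ} {A B η : ℝ}
    (hu : Continuous u) (huφ : Continuous uφ) (hs : Continuous s)
    (hφ : ∀ φ ∈ Ioo (-(π / 2)) (π / 2), ∀ ψ ∈ Icc (-π) π,
      HasDerivAt (fun y => u (η, y, ψ)) (uφ (η, φ, ψ)) φ)
    (heq : ∀ φ ∈ Icc (-(π / 2)) (π / 2), ∀ ψ ∈ Icc (-π) π,
      sin φ * uη (η, φ, ψ) + (A + B * cos ψ ^ 2) * cos φ * uφ (η, φ, ψ) + u (η, φ, ψ) - m η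
        = s (η, φ, ψ)) :
    brkt (fun p => sin p.2.1 ^ 2) uη η =
      -brkt (fun p => sin p.2.1) (fun p => u p - m p.1) η
        + A * brkt (fun p => 1 - 3 * sin p.2.1 ^ 2) (fun p => u p - m p.1) η
        + B * brkt (fun p => (1 - 3 * sin p.2.1 ^ 2) * cos p.2.2 ^ 2) (fun p => u p - m p.1) η
        + brkt (fun p => sin p.2.1) s η := by
  have hpi : -π ≤ π := by linarith [pi_pos]
  have hψ : EqOn (fun ψ => ∫ φ in -(π / 2)..π / 2, sin φ ^ 2 * uη (η, φ, ψ) * cos φ)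
      (fun ψ => -(∫ φ in -(π / 2)..π / 2, sin φ * (u (η, φ, ψ) - m η) * cos φ)
        + A * (∫ φ in -(π / 2)..π / 2, (1 - 3 * sin φ ^ 2) * (u (η, φ, ψ) - m η) * cos φ)
        + B * (cos ψ ^ 2 *
          ∫ φ in -(π / 2)..π / 2, (1 - 3 * sin φ ^ 2) * (u (η, φ, ψ) - m η) * cos φ)
        + ∫ φ in -(π / 2)..π / 2, sin φ * s (η, φ, ψ) * cos φ) [[-π, π]] := fun ψ hψ => by
    rw [uIcc_of_le hpi] at hψ
    dsimp only
    rw [integral_sin_sq_mul_cos_of_transport (by fun_prop) (by fun_prop) (by fun_prop)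
      (fun φ hφ' => hφ φ hφ' ψ hψ) (fun φ hφ' => heq φ hφ' ψ hψ)]
    ring
  simp only [brkt]
  have hB : ∀ ψ, cos ψ ^ 2 *
        ∫ φ in -(π / 2)..π / 2, (1 - 3 * sin φ ^ 2) * (u (η, φ, ψ) - m η) * cos φ
      = ∫ φ in -(π / 2)..π / 2, (1 - 3 * sin φ ^ 2) * cos ψ ^ 2 * (u (η, φ, ψ) - m η) * cos φ := by
    intro ψ
    rw [← intervalIntegral.integral_const_mul]
    congr 1 with φ
    ring
  rw [intervalIntegral.integral_congr hψ, intervalIntegral.integral_add,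
    intervalIntegral.integral_add, intervalIntegral.integral_add, intervalIntegral.integral_neg,
    intervalIntegral.integral_const_mul, intervalIntegral.integral_const_mul]
  · simp only [hB]
  all_goals apply Continuous.intervalIntegrable; fun_prop

theorem isClosed_milneDomain (L : ℝ) : IsClosed (milneDomain L) :=
  isClosed_Icc.prod (isClosed_Icc.prod isClosed_Icc)

theorem interior_milneDomain (L : ℝ) :
    interior (milneDomain L) = Ioo 0 L ×ˢ Ioo (-(π / 2)) (π / 2) ×ˢ Ioo (-π) π := by
  simp only [milneDomain, interior_prod_eq, interior_Icc]

theorem uniqueDiffOn_milneDomain {L : ℝ} (hL : 0 < L) : UniqueDiffOn ℝ (milneDomain L) :=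
  (uniqueDiffOn_Icc hL).prod ((uniqueDiffOn_Icc (by linarith [pi_pos])).prod
    (uniqueDiffOn_Icc (by linarith [pi_pos])))

theorem mul_layerL {ε : ℝ} (hε : 0 < ε) (n : ℝ) : ε * layerL ε n = ε ^ (1 - n) := by
  rw [layerL, sub_eq_add_neg, rpow_add hε, rpow_one]

theorem force_eq_Ftilde_add_Gfun_mul_cos_sq {R₁ R₂ ε η : ℝ} (hR₁ : R₁ - ε * η ≠ 0)
    (hR₂ : R₂ - ε * η ≠ 0) (ψ : ℝ) :
    force R₁ R₂ ε η ψ = Ftilde R₁ ε η + Gfun R₁ R₂ ε η * cos ψ ^ 2 := by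
  rw [force, Ftilde, Gfun, sin_sq]
  field_simp
  ring

@[fun_prop]
theorem continuous_force (R₁ R₂ ε η : ℝ) : Continuous (force R₁ R₂ ε η) := by
  unfold force
  fun_prop

theorem exists_continuous_partialDerivs {f : ℝ × ℝ × ℝ → ℝ} {L : ℝ} (hL : 0 < L)
    (hf : ContDiffOn ℝ 1 f (milneDomain L)) :
    ∃ fη fφ : ℝ × ℝ × ℝ → ℝ, Continuous fη ∧ Continuous fφ ∧
      (∀ g, EqOn g f (milneDomain L) → ∀ x ∈ Ioo 0 L, ∀ φ ∈ Icc (-(π / 2)) (π / 2),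
        ∀ ψ ∈ Icc (-π) π, HasDerivAt (fun y => g (y, φ, ψ)) (fη (x, φ, ψ)) x) ∧
      (∀ g, EqOn g f (milneDomain L) → ∀ x ∈ Ioo 0 L, ∀ φ ∈ Ioo (-(π / 2)) (π / 2),
        ∀ ψ ∈ Icc (-π) π, HasDerivAt (fun y => g (x, y, ψ)) (fφ (x, φ, ψ)) φ) := by
  have hdiff := hf.differentiableOn one_ne_zero
  have hfd := hf.continuousOn_fderivWithin (uniqueDiffOn_milneDomain hL) le_rfl
  obtain ⟨fη, hfη, hfη_eq⟩ := exists_continuous_eqOn (isClosed_milneDomain L)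
    ((ContinuousLinearMap.apply ℝ ℝ ((1 : ℝ), (0 : ℝ × ℝ))).continuous.comp_continuousOn hfd)
  obtain ⟨fφ, hfφ, hfφ_eq⟩ := exists_continuous_eqOn (isClosed_milneDomain L)
    ((ContinuousLinearMap.apply ℝ ℝ ((0 : ℝ), (1 : ℝ), (0 : ℝ))).continuous.comp_continuousOn hfd)
  refine ⟨fη, fφ, hfη, hfφ, fun g hg x hx φ hφ ψ hψ => ?_, fun g hg x hx φ hφ ψ hψ => ?_⟩
  · rw [hfη_eq ⟨Ioo_subset_Icc_self hx, hφ, hψ⟩]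
    exact hdiff.hasDerivAt_comp_of_eqOn hg ((hasDerivAt_id x).prodMk (hasDerivAt_const x (φ, ψ)))
      (mem_of_superset (Icc_mem_nhds hx.1 hx.2) fun y hy => ⟨hy, hφ, hψ⟩)
  · rw [hfφ_eq ⟨Ioo_subset_Icc_self hx, Ioo_subset_Icc_self hφ, hψ⟩]
    exact hdiff.hasDerivAt_comp_of_eqOn hg ((hasDerivAt_const φ x).prodMk
        ((hasDerivAt_id φ).prodMk (hasDerivAt_const φ ψ)))
      (mem_of_superset (Icc_mem_nhds hφ.1 hφ.2) fun y hy => ⟨Ioo_subset_Icc_self hx, hy, hψ⟩)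

theorem IsMilneSolution.exists_continuous_extension {R₁ R₂ ε n : ℝ} {h : ℝ → ℝ → ℝ}
    {S f : ℝ × ℝ × ℝ → ℝ} (hf : IsMilneSolution R₁ R₂ ε n h S f)
    (hS : ContinuousOn S (milneDomain (layerL ε n))) (hL : 0 < layerL ε n) :
    ∃ u uη uφ s : ℝ × ℝ × ℝ → ℝ,
      Continuous u ∧ Continuous uη ∧ Continuous uφ ∧ Continuous s ∧
      EqOn u f (milneDomain (layerL ε n)) ∧ EqOn s S (milneDomain (layerL ε n)) ∧
      (∀ x ∈ Ioo 0 (layerL ε n), ∀ φ ∈ Icc (-(π / 2)) (π / 2), ∀ ψ ∈ Icc (-π) π,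
        HasDerivAt (fun y => u (y, φ, ψ)) (uη (x, φ, ψ)) x) ∧
      (∀ x ∈ Ioo 0 (layerL ε n), ∀ φ ∈ Ioo (-(π / 2)) (π / 2), ∀ ψ ∈ Icc (-π) π,
        HasDerivAt (fun y => u (x, y, ψ)) (uφ (x, φ, ψ)) φ) ∧
      ∀ x ∈ Ioo 0 (layerL ε n), ∀ φ ∈ Icc (-(π / 2)) (π / 2), ∀ ψ ∈ Icc (-π) π,
        sin φ * uη (x, φ, ψ) + force R₁ R₂ ε x ψ * cos φ * uφ (x, φ, ψ) + u (x, φ, ψ)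
          - angAvg f x = s (x, φ, ψ) := by
  set D := milneDomain (layerL ε n)
  obtain ⟨u, hu, hfu⟩ := exists_continuous_eqOn (isClosed_milneDomain _) hf.smooth.continuousOn
  obtain ⟨s, hs, hSs⟩ := exists_continuous_eqOn (isClosed_milneDomain _) hS
  obtain ⟨uη, uφ, huη, huφ, lineη, lineφ⟩ := exists_continuous_partialDerivs hL hf.smooth
  refine ⟨u, uη, uφ, s, hu, huη, huφ, hs, hfu, hSs, lineη u hfu, lineφ u hfu,
    fun x hx φ hφ ψ hψ => ?_⟩
  have hclosure : EqOn
      (fun q : ℝ × ℝ => sin q.1 * uη (x, q.1, q.2)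
        + force R₁ R₂ ε x q.2 * cos q.1 * uφ (x, q.1, q.2) + u (x, q.1, q.2) - angAvg f x)
      (fun q => s (x, q.1, q.2)) (Icc (-(π / 2)) (π / 2) ×ˢ Icc (-π) π) := by
    refine EqOn.of_Ioo_prod_Ioo (by linarith [pi_pos]) (by linarith [pi_pos])
      (by fun_prop) (by fun_prop) fun q ⟨hq₁, hq₂⟩ => ?_
    have hp : (x, q.1, q.2) ∈ D :=
      ⟨Ioo_subset_Icc_self hx, Ioo_subset_Icc_self hq₁, Ioo_subset_Icc_self hq₂⟩
    have := hf.eqn (x, q.1, q.2) (by rw [interior_milneDomain]; exact ⟨hx, hq₁, hq₂⟩)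
    rwa [dEta, dPhi, (lineη f (eqOn_refl f D) x hx q.1 hp.2.1 q.2 hp.2.2).deriv,
      (lineφ f (eqOn_refl f D) x hx q.1 hq₁ q.2 hp.2.2).deriv, ← hfu hp, ← hSs hp] at this
  simpa only using hclosure (x := (φ, ψ)) ⟨hφ, hψ⟩

theorem milne_second_moment_identity_general (R₁ R₂ n ε : ℝ)
    (hε : ε ∈ Ioo (0 : ℝ) 1)
    (hεn : ε ^ (1 - n) < min R₁ R₂)
    (h : ℝ → ℝ → ℝ) (S f : ℝ × ℝ × ℝ → ℝ)
    (hS : ContinuousOn S (milneDomain (layerL ε n)))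
    (hf : IsMilneSolution R₁ R₂ ε n h S f) :
    ∀ η ∈ Ioo (0 : ℝ) (layerL ε n),
      deriv (brkt (fun p => Real.sin p.2.1 ^ 2) f) η
        = -brkt (fun p => Real.sin p.2.1) (fun p => f p - angAvg f p.1) η
          + Ftilde R₁ ε η * brkt (fun p => 1 - 3 * Real.sin p.2.1 ^ 2)
              (fun p => f p - angAvg f p.1) η
          + Gfun R₁ R₂ ε η *
              brkt (fun p => (1 - 3 * Real.sin p.2.1 ^ 2) * Real.cos p.2.2 ^ 2)
                (fun p => f p - angAvg f p.1) η
          + brkt (fun p => Real.sin p.2.1) S η := by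
  intro η hη
  obtain ⟨u, uη, uφ, s, hu, huη, huφ, hs, hfu, hSs, hη_line, hφ_line, heq⟩ :=
    hf.exists_continuous_extension hS (hη.1.trans hη.2)
  have hεη : ε * η < min R₁ R₂ :=
    ((mul_lt_mul_of_pos_left hη.2 hε.1).trans_eq (mul_layerL hε.1 n)).trans hεn
  have hforce := force_eq_Ftilde_add_Gfun_mul_cos_sq
    (sub_pos.2 (hεη.trans_le (min_le_left _ _))).ne'
    (sub_pos.2 (hεη.trans_le (min_le_right _ _))).ne'
  have hderiv := hasDerivAt_brkt (w := fun q => sin q.1 ^ 2) isOpen_Ioo hη (by fun_prop) hu huη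
    hη_line
  have hid := brkt_sin_sq_eq_of_transport (m := angAvg f) hu huφ hs
    (fun φ hφ ψ hψ => hφ_line η hη φ hφ ψ hψ)
    fun φ hφ ψ hψ => by rw [← hforce]; exact heq η hη φ hφ ψ hψ
  have hfu' : EqOn (fun p => f p - angAvg f p.1) (fun p => u p - angAvg f p.1)
      (milneDomain (layerL ε n)) := fun p hp => by simp only [hfu hp]
  have hbrkt : brkt (fun p => sin p.2.1 ^ 2) f =ᶠ[𝓝 η] brkt (fun p => sin p.2.1 ^ 2) u :=
    mem_of_superset (Icc_mem_nhds hη.1 hη.2) fun x hx => brkt_congr_of_eqOn hfu.symm hx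
  rw [hbrkt.deriv_eq, hderiv.deriv, hid]
  simp only [brkt_congr_of_eqOn hfu' (Ioo_subset_Icc_self hη),
    brkt_congr_of_eqOn hSs.symm (Ioo_subset_Icc_self hη)]

/-- identity (mt 22): second-moment identity. -/
theorem milne_second_moment_identity (R₁ R₂ n ε : ℝ) (hR₁ : 0 < R₁) (hR₂ : 0 < R₂)
    (hn : n ∈ Ioo (0 : ℝ) (1 / 2)) (hε : ε ∈ Ioo (0 : ℝ) 1)
    (hεn : ε ^ (1 - n) < min R₁ R₂)
    (h : ℝ → ℝ → ℝ) (S f : ℝ × ℝ × ℝ → ℝ)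
    (hS : ContinuousOn S (milneDomain (layerL ε n)))
    (hf : IsMilneSolution R₁ R₂ ε n h S f) :
    ∀ η ∈ Ioo (0 : ℝ) (layerL ε n),
      deriv (brkt (fun p => Real.sin p.2.1 ^ 2) f) η
        = -brkt (fun p => Real.sin p.2.1) (fun p => f p - angAvg f p.1) η
          + Ftilde R₁ ε η * brkt (fun p => 1 - 3 * Real.sin p.2.1 ^ 2)
              (fun p => f p - angAvg f p.1) η
          + Gfun R₁ R₂ ε η *
              brkt (fun p => (1 - 3 * Real.sin p.2.1 ^ 2) * Real.cos p.2.2 ^ 2)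
                (fun p => f p - angAvg f p.1) η
          + brkt (fun p => Real.sin p.2.1) S η :=
  milne_second_moment_identity_general R₁ R₂ n ε hε hεn h S f hS hf

end MilneStmt
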